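/- For every positive integer n: ∑_{k=1}^∞ q^{k(k+1)/2}(-1)^{k-1} q^{-nk}/((1-q^k)(q;q)_k) = n + ∑_{k=1}^∞ q^k/(1-q^k), where 0 < q < 1 and both series converge absolutely. -/

import Mathlib

/-!
Put `c k = (-1)^k q^(k(k+1)/2) / (q;q)_k`, `E x = ∑ c k x^k` and
`G x = -∑_{k ≥ 1} c k x^k / (1 - q^k)`, so that the left-hand side is `G (q^{-n})`. The
recursion `c (k+1) (1 - q^(k+1)) = -q^(k+1) c k` gives `E x = (1 - q x) E (q x)`, so `E` vanishes at
`q⁻¹, q⁻², …`, and termwise `G x - G (q x) = 1 - E x`. Hence `G (q^{-n}) = n + G 1`.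

To evaluate `G 1`, truncate: replacing `c k` by `c k (q^(n-k+1); q)_k` (a Gaussian binomial
coefficient times `(-1)^k q^(k(k+1)/2)`) yields a finite Euler series obeying the same functional
equation, so it too vanishes at `q⁻¹`. This makes the truncated `G 1` grow by exactly
`q^(n+1) / (1 - q^(n+1))` from `n` to `n + 1`, and dominated convergence as `n → ∞` gives
`G 1 = ∑_{k ≥ 1} q^k / (1 - q^k)`.
-/

open Finset Filter Topology

noncomputable def qPoch (q : ℝ) (k : ℕ) : ℝ := ∏ j ∈ range k, (1 - q ^ (j + 1))

noncomputable def eulerCoeff (q : ℝ) (k : ℕ) : ℝ :=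
  (-1) ^ k * q ^ (k * (k + 1) / 2) / qPoch q k

noncomputable def eulerSeries (q x : ℝ) : ℝ := ∑' k, eulerCoeff q k * x ^ k

noncomputable def qlogSeries (q x : ℝ) : ℝ :=
  ∑' k, -(eulerCoeff q (k + 1) * x ^ (k + 1)) / (1 - q ^ (k + 1))

/-- `(q^(n-k+1); q)_k`, so that `qDesc q n k / qPoch q k` is the Gaussian binomial `[n, k]_q`.
Through the truncated subtraction the factor `i = n` is `1 - q^0 = 0`, so it vanishes for
`n < k`. -/
noncomputable def qDesc (q : ℝ) (n k : ℕ) : ℝ := ∏ i ∈ range k, (1 - q ^ (n - i))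

lemma triangle_succ (k : ℕ) : (k + 1) * (k + 1 + 1) / 2 = k * (k + 1) / 2 + (k + 1) := by
  rw [show (k + 1) * (k + 1 + 1) = k * (k + 1) + (k + 1) * 2 by ring,
    Nat.add_mul_div_right _ _ two_pos]

lemma summable_of_forall_lt_eq_zero {f : ℕ → ℝ} (n : ℕ) (hf : ∀ k, n < k → f k = 0) :
    Summable f :=
  summable_of_ne_finset_zero (s := range (n + 1)) fun k hk => hf k (by simpa using hk)

lemma tsum_mul_pow_eq_one_sub_mul_tsum {a b : ℕ → ℝ} {q x : ℝ}
    (ha : Summable fun k => a k * (q * x) ^ k) (h0 : b 0 = a 0)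
    (hsucc : ∀ k, b (k + 1) = q ^ (k + 1) * (a (k + 1) - a k)) :
    ∑' k, b k * x ^ k = (1 - q * x) * ∑' k, a k * (q * x) ^ k := by
  have hterm : ∀ k, b (k + 1) * x ^ (k + 1) =
      a (k + 1) * (q * x) ^ (k + 1) - q * x * (a k * (q * x) ^ k) := fun k => by
    rw [hsucc]; ring
  have ha' : Summable fun k => a (k + 1) * (q * x) ^ (k + 1) := (summable_nat_add_iff 1).2 ha
  have hb : Summable fun k => b k * x ^ k :=
    (summable_nat_add_iff 1).1 <| (ha'.sub (ha.mul_left (q * x))).congr fun k => (hterm k).symm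
  rw [hb.tsum_eq_zero_add, tsum_congr hterm, ha'.tsum_sub (ha.mul_left _), tsum_mul_left,
    ha.tsum_eq_zero_add, h0]
  ring

section

variable {q : ℝ}

lemma one_sub_pow_succ_pos (hq0 : 0 ≤ q) (hq1 : q < 1) (k : ℕ) : 0 < 1 - q ^ (k + 1) :=
  sub_pos.2 (pow_lt_one₀ hq0 hq1 k.succ_ne_zero)

lemma inv_one_sub_pow_succ_le (hq0 : 0 ≤ q) (hq1 : q < 1) (k : ℕ) :
    (1 - q ^ (k + 1))⁻¹ ≤ (1 - q)⁻¹ := by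
  have := pow_le_of_le_one hq0 hq1.le k.succ_ne_zero
  gcongr

lemma qPoch_pos (hq0 : 0 ≤ q) (hq1 : q < 1) (k : ℕ) : 0 < qPoch q k :=
  prod_pos fun j _ => one_sub_pow_succ_pos hq0 hq1 j

lemma eulerCoeff_zero : eulerCoeff q 0 = 1 := by simp [eulerCoeff, qPoch]

lemma eulerCoeff_succ_mul (hq0 : 0 ≤ q) (hq1 : q < 1) (k : ℕ) :
    eulerCoeff q (k + 1) * (1 - q ^ (k + 1)) = -(q ^ (k + 1) * eulerCoeff q k) := by
  have := (qPoch_pos hq0 hq1 k).ne'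
  have := (one_sub_pow_succ_pos hq0 hq1 k).ne'
  rw [eulerCoeff, eulerCoeff, qPoch, prod_range_succ, ← qPoch, triangle_succ, pow_add]
  field_simp
  ring

lemma summable_eulerCoeff_mul_pow (hq0 : 0 ≤ q) (hq1 : q < 1) (x : ℝ) :
    Summable fun k => eulerCoeff q k * x ^ k := by
  set r : ℕ → ℝ := fun k => q ^ (k + 1) / (1 - q ^ (k + 1)) * |x|
  have hr : Tendsto r atTop (𝓝 0) := by
    have h := (tendsto_pow_atTop_nhds_zero_of_lt_one hq0 hq1).comp (tendsto_add_atTop_nat 1)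
    simpa using (h.div (tendsto_const_nhds.sub h) (by simp)).mul_const |x|
  refine summable_of_ratio_norm_eventually_le (r := 1 / 2) (by norm_num) ?_
  filter_upwards [hr.eventually (eventually_le_nhds (by norm_num : (0 : ℝ) < 1 / 2))] with k hk
  have hc : eulerCoeff q (k + 1) = -(q ^ (k + 1) / (1 - q ^ (k + 1)) * eulerCoeff q k) := by
    have := (one_sub_pow_succ_pos hq0 hq1 k).ne'
    field_simp
    linear_combination eulerCoeff_succ_mul hq0 hq1 k
  have hrk : 0 ≤ q ^ (k + 1) / (1 - q ^ (k + 1)) :=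
    div_nonneg (pow_nonneg hq0 _) (one_sub_pow_succ_pos hq0 hq1 k).le
  calc ‖eulerCoeff q (k + 1) * x ^ (k + 1)‖ = r k * ‖eulerCoeff q k * x ^ k‖ := by
        simp only [r, hc, norm_mul, norm_neg, norm_pow, Real.norm_eq_abs, abs_of_nonneg hrk]
        ring
    _ ≤ 1 / 2 * ‖eulerCoeff q k * x ^ k‖ := by gcongr

lemma eulerSeries_eq_mul (hq0 : 0 ≤ q) (hq1 : q < 1) (x : ℝ) :
    eulerSeries q x = (1 - q * x) * eulerSeries q (q * x) :=
  tsum_mul_pow_eq_one_sub_mul_tsum (summable_eulerCoeff_mul_pow hq0 hq1 _) rfl fun k => by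
    linear_combination eulerCoeff_succ_mul hq0 hq1 k

lemma eulerSeries_inv_pow_succ (hq0 : 0 < q) (hq1 : q < 1) (m : ℕ) :
    eulerSeries q (q⁻¹ ^ (m + 1)) = 0 := by
  induction m with
  | zero =>
    rw [eulerSeries_eq_mul hq0.le hq1, pow_one, mul_inv_cancel₀ hq0.ne', sub_self, zero_mul]
  | succ m ih =>
    rw [eulerSeries_eq_mul hq0.le hq1, pow_succ' q⁻¹ (m + 1), mul_inv_cancel_left₀ hq0.ne', ih,
      mul_zero]

lemma summable_qlogSeries (hq0 : 0 ≤ q) (hq1 : q < 1) (x : ℝ) :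
    Summable fun k => -(eulerCoeff q (k + 1) * x ^ (k + 1)) / (1 - q ^ (k + 1)) := by
  refine (((summable_nat_add_iff 1).2 (summable_eulerCoeff_mul_pow hq0 hq1 x)).norm.mul_right
    (1 - q)⁻¹).of_norm_bounded fun k => ?_
  rw [norm_div, norm_neg, div_eq_mul_inv, Real.norm_of_nonneg (one_sub_pow_succ_pos hq0 hq1 k).le]
  exact mul_le_mul_of_nonneg_left (inv_one_sub_pow_succ_le hq0 hq1 k) (norm_nonneg _)

lemma qlogSeries_sub_mul (hq0 : 0 ≤ q) (hq1 : q < 1) (x : ℝ) :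
    qlogSeries q x - qlogSeries q (q * x) = 1 - eulerSeries q x := by
  have hterm : ∀ k, -(eulerCoeff q (k + 1) * x ^ (k + 1)) / (1 - q ^ (k + 1)) -
      -(eulerCoeff q (k + 1) * (q * x) ^ (k + 1)) / (1 - q ^ (k + 1)) =
      -(eulerCoeff q (k + 1) * x ^ (k + 1)) := fun k => by
    have := (one_sub_pow_succ_pos hq0 hq1 k).ne'
    field_simp
    ring
  rw [qlogSeries, qlogSeries, ← (summable_qlogSeries hq0 hq1 x).tsum_sub
    (summable_qlogSeries hq0 hq1 _), tsum_congr hterm, tsum_neg, eulerSeries,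
    (summable_eulerCoeff_mul_pow hq0 hq1 x).tsum_eq_zero_add, eulerCoeff_zero]
  ring

lemma qlogSeries_inv_pow (hq0 : 0 < q) (hq1 : q < 1) (n : ℕ) :
    qlogSeries q (q⁻¹ ^ n) = n + qlogSeries q 1 := by
  induction n with
  | zero => simp
  | succ n ih =>
    have h := qlogSeries_sub_mul hq0.le hq1 (q⁻¹ ^ (n + 1))
    rw [eulerSeries_inv_pow_succ hq0 hq1, pow_succ' q⁻¹ n, mul_inv_cancel_left₀ hq0.ne', ih,
      ← pow_succ'] at h
    push_cast
    linarith

lemma qDesc_zero_right (n : ℕ) : qDesc q n 0 = 1 := prod_range_zero _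

lemma qDesc_succ (n k : ℕ) : qDesc q n (k + 1) = qDesc q n k * (1 - q ^ (n - k)) :=
  prod_range_succ _ _

lemma qDesc_succ_succ (n k : ℕ) :
    qDesc q (n + 1) (k + 1) = (1 - q ^ (n + 1)) * qDesc q n k := by
  simp [qDesc, prod_range_succ', mul_comm]

lemma qDesc_eq_zero {n k : ℕ} (h : n < k) : qDesc q n k = 0 :=
  prod_eq_zero (mem_range.2 h) (by simp)

lemma pow_mul_qDesc (n k : ℕ) :
    q ^ (n + 1) * qDesc q n k = q ^ (n - k) * q ^ (k + 1) * qDesc q n k := by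
  rcases le_or_gt k n with hk | hk
  · rw [← pow_add, show n - k + (k + 1) = n + 1 by omega]
  · rw [qDesc_eq_zero hk, mul_zero, mul_zero]

lemma qDesc_mem_Icc (hq0 : 0 ≤ q) (hq1 : q ≤ 1) (n k : ℕ) : qDesc q n k ∈ Set.Icc 0 1 :=
  have hfac : ∀ i ∈ range k, 0 ≤ 1 - q ^ (n - i) := fun _ _ =>
    sub_nonneg.2 (pow_le_one₀ hq0 hq1)
  ⟨prod_nonneg hfac, prod_le_one hfac fun _ _ => sub_le_self _ (pow_nonneg hq0 _)⟩

lemma tendsto_qDesc (hq0 : 0 ≤ q) (hq1 : q < 1) (k : ℕ) :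
    Tendsto (fun n => qDesc q n k) atTop (𝓝 1) := by
  have h : ∀ i ∈ range k, Tendsto (fun n => 1 - q ^ (n - i)) atTop (𝓝 1) := fun i _ => by
    simpa using tendsto_const_nhds.sub
      ((tendsto_pow_atTop_nhds_zero_of_lt_one hq0 hq1).comp (tendsto_sub_atTop_nat i))
  simpa [qDesc] using tendsto_finsetProd (range k) h

lemma eulerCoeff_mul_qDesc_succ_succ (hq0 : 0 ≤ q) (hq1 : q < 1) (n k : ℕ) :
    eulerCoeff q (k + 1) * qDesc q (n + 1) (k + 1) =
      q ^ (k + 1) *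
        (eulerCoeff q (k + 1) * qDesc q n (k + 1) - eulerCoeff q k * qDesc q n k) := by
  rw [qDesc_succ_succ, qDesc_succ]
  linear_combination qDesc q n k * eulerCoeff_succ_mul hq0 hq1 k
    + (-eulerCoeff q (k + 1)) * pow_mul_qDesc (q := q) n k

lemma tsum_eulerCoeff_mul_qDesc_mul_inv_pow (hq0 : 0 < q) (hq1 : q < 1) (n : ℕ) :
    ∑' k, eulerCoeff q k * qDesc q (n + 1) k * q⁻¹ ^ k = 0 := by
  have h := tsum_mul_pow_eq_one_sub_mul_tsum (x := q⁻¹)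
    (a := fun k => eulerCoeff q k * qDesc q n k) (b := fun k => eulerCoeff q k * qDesc q (n + 1) k)
    (summable_of_forall_lt_eq_zero n fun k hk => by simp [qDesc_eq_zero hk])
    (by simp [qDesc_zero_right]) (eulerCoeff_mul_qDesc_succ_succ hq0.le hq1 n)
  rwa [mul_inv_cancel₀ hq0.ne', sub_self, zero_mul] at h

lemma neg_eulerCoeff_mul_qDesc_succ_div (hq0 : 0 < q) (hq1 : q < 1) (n k : ℕ) :
    -(eulerCoeff q (k + 1) * qDesc q (n + 1) (k + 1)) / (1 - q ^ (k + 1)) =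
      -(eulerCoeff q (k + 1) * qDesc q n (k + 1)) / (1 - q ^ (k + 1)) -
        q ^ (n + 1) / (1 - q ^ (n + 1)) *
          (eulerCoeff q (k + 1) * qDesc q (n + 1) (k + 1) * q⁻¹ ^ (k + 1)) := by
  have := (one_sub_pow_succ_pos hq0.le hq1 k).ne'
  have := (one_sub_pow_succ_pos hq0.le hq1 n).ne'
  rw [qDesc_succ_succ, qDesc_succ, inv_pow]
  field_simp
  linear_combination eulerCoeff q (k + 1) * pow_mul_qDesc (q := q) n k

lemma tsum_neg_eulerCoeff_mul_qDesc_div_eq_sum (hq0 : 0 < q) (hq1 : q < 1) (n : ℕ) :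
    ∑' k, -(eulerCoeff q (k + 1) * qDesc q n (k + 1)) / (1 - q ^ (k + 1)) =
      ∑ k ∈ range n, q ^ (k + 1) / (1 - q ^ (k + 1)) := by
  induction n with
  | zero => simp [qDesc_eq_zero (Nat.succ_pos _)]
  | succ n ih =>
    have hsum : ∑' k, eulerCoeff q (k + 1) * qDesc q (n + 1) (k + 1) * q⁻¹ ^ (k + 1) = -1 := by
      have h := tsum_eulerCoeff_mul_qDesc_mul_inv_pow hq0 hq1 n
      rw [(summable_of_forall_lt_eq_zero (n + 1) fun k hk => by
        simp [qDesc_eq_zero hk]).tsum_eq_zero_add, eulerCoeff_zero, qDesc_zero_right, pow_zero,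
        one_mul, one_mul] at h
      linarith
    have hs₀ : Summable fun k =>
        -(eulerCoeff q (k + 1) * qDesc q n (k + 1)) / (1 - q ^ (k + 1)) :=
      summable_of_forall_lt_eq_zero n fun k hk => by simp [qDesc_eq_zero (Nat.lt_succ_of_lt hk)]
    have hs₁ : Summable fun k =>
        eulerCoeff q (k + 1) * qDesc q (n + 1) (k + 1) * q⁻¹ ^ (k + 1) :=
      summable_of_forall_lt_eq_zero n fun k hk => by simp [qDesc_eq_zero (Nat.succ_lt_succ hk)]
    rw [tsum_congr (neg_eulerCoeff_mul_qDesc_succ_div hq0 hq1 n), hs₀.tsum_sub (hs₁.mul_left _),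
      tsum_mul_left, hsum, ih, sum_range_succ]
    ring

lemma summable_pow_succ_div_one_sub_pow_succ (hq0 : 0 ≤ q) (hq1 : q < 1) :
    Summable fun k => q ^ (k + 1) / (1 - q ^ (k + 1)) := by
  refine (((summable_nat_add_iff 1).2 (summable_geometric_of_lt_one hq0 hq1)).mul_right
    (1 - q)⁻¹).of_nonneg_of_le (fun k => div_nonneg (pow_nonneg hq0 _)
      (one_sub_pow_succ_pos hq0 hq1 k).le) fun k => ?_
  rw [div_eq_mul_inv]
  exact mul_le_mul_of_nonneg_left (inv_one_sub_pow_succ_le hq0 hq1 k) (pow_nonneg hq0 _)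

lemma qlogSeries_one (hq0 : 0 < q) (hq1 : q < 1) :
    qlogSeries q 1 = ∑' k, q ^ (k + 1) / (1 - q ^ (k + 1)) := by
  have hlim : Tendsto
      (fun n => ∑' k, -(eulerCoeff q (k + 1) * qDesc q n (k + 1)) / (1 - q ^ (k + 1)))
      atTop (𝓝 (qlogSeries q 1)) := by
    refine tendsto_tsum_of_dominated_convergence (summable_qlogSeries hq0.le hq1 1).norm
      (fun k => ?_) (Eventually.of_forall fun n k => ?_)
    · simpa using (((tendsto_qDesc hq0.le hq1 (k + 1)).const_mul
        (eulerCoeff q (k + 1))).neg.div_const (1 - q ^ (k + 1)))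
    · have := qDesc_mem_Icc hq0.le hq1.le n (k + 1)
      simp only [norm_div, norm_neg, norm_mul, one_pow, mul_one, Real.norm_of_nonneg this.1]
      gcongr
      exact mul_le_of_le_one_right (norm_nonneg _) this.2
  simp_rw [tsum_neg_eulerCoeff_mul_qDesc_div_eq_sum hq0 hq1] at hlim
  exact tendsto_nhds_unique hlim
    (summable_pow_succ_div_one_sub_pow_succ hq0.le hq1).hasSum.tendsto_sum_nat

end

theorem qlog_alternating_series_identity_general (q : ℝ) (hq0 : 0 < q) (hq1 : q < 1)
    (n : ℕ) :
    Summable (fun k : ℕ =>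
      |q ^ ((k + 1) * (k + 2) / 2) * (-1 : ℝ) ^ k * q ^ (-(n : ℤ) * (k + 1)) /
        ((1 - q ^ (k + 1)) * ∏ j ∈ Finset.range (k + 1), (1 - q ^ (j + 1)))|) ∧
    Summable (fun k : ℕ => |q ^ (k + 1) / (1 - q ^ (k + 1))|) ∧
    ∑' k : ℕ, q ^ ((k + 1) * (k + 2) / 2) * (-1 : ℝ) ^ k * q ^ (-(n : ℤ) * (k + 1)) /
        ((1 - q ^ (k + 1)) * ∏ j ∈ Finset.range (k + 1), (1 - q ^ (j + 1)))
      = n + ∑' k : ℕ, q ^ (k + 1) / (1 - q ^ (k + 1)) := by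
  have hterm : ∀ k : ℕ,
      q ^ ((k + 1) * (k + 2) / 2) * (-1 : ℝ) ^ k * q ^ (-(n : ℤ) * (k + 1)) /
        ((1 - q ^ (k + 1)) * ∏ j ∈ Finset.range (k + 1), (1 - q ^ (j + 1))) =
      -(eulerCoeff q (k + 1) * (q⁻¹ ^ n) ^ (k + 1)) / (1 - q ^ (k + 1)) := fun k => by
    have hzpow : q ^ (-(n : ℤ) * (k + 1)) = (q⁻¹ ^ n) ^ (k + 1) := by
      rw [← pow_mul, inv_pow, ← zpow_natCast, ← zpow_neg]
      push_cast
      ring_nf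
    rw [hzpow, eulerCoeff, qPoch, pow_succ (-1 : ℝ), add_assoc, one_add_one_eq_two, ← div_div]
    ring
  refine ⟨?_, (summable_pow_succ_div_one_sub_pow_succ hq0.le hq1).abs, ?_⟩
  · simpa only [hterm] using (summable_qlogSeries hq0.le hq1 _).abs
  · rw [tsum_congr hterm, ← qlogSeries, qlogSeries_inv_pow hq0 hq1, qlogSeries_one hq0 hq1]

theorem qlog_alternating_series_identity (q : ℝ) (hq0 : 0 < q) (hq1 : q < 1)
    (n : ℕ) (hn : 1 ≤ n) :
    Summable (fun k : ℕ =>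
      |q ^ ((k + 1) * (k + 2) / 2) * (-1 : ℝ) ^ k * q ^ (-(n : ℤ) * (k + 1)) /
        ((1 - q ^ (k + 1)) * ∏ j ∈ Finset.range (k + 1), (1 - q ^ (j + 1)))|) ∧
    Summable (fun k : ℕ => |q ^ (k + 1) / (1 - q ^ (k + 1))|) ∧
    ∑' k : ℕ, q ^ ((k + 1) * (k + 2) / 2) * (-1 : ℝ) ^ k * q ^ (-(n : ℤ) * (k + 1)) /
        ((1 - q ^ (k + 1)) * ∏ j ∈ Finset.range (k + 1), (1 - q ^ (j + 1)))
      = n + ∑' k : ℕ, q ^ (k + 1) / (1 - q ^ (k + 1)) :=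
  qlog_alternating_series_identity_general q hq0 hq1 n
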